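/- For every ε > 0: (i) there exists a swap Schelling game (G,b,1/2) on a cycle graph G, a swap equilibrium σ, and a strategy profile σ* with DoI(σ*)/DoI(σ) > 2 − ε; and (ii) for every peak Λ < 1/2 there exists a swap Schelling game (G,b,Λ) on a cycle graph G, a swap equilibrium σ, and a strategy profile σ* with DoI(σ*)/DoI(σ) > 3/2 − ε. -/

import Mathlib

open Finset

namespace SwapSchelling

variable {V : Type*} [Fintype V] [DecidableEq V]

open scoped Classical in
/-- The closed neighborhood `N[v]` of a node `v` in `G`, as a `Finset`. -/
noncomputable def closedNbhd (G : SimpleGraph V) (v : V) : Finset V :=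
  univ.filter (fun u => u = v ∨ G.Adj v u)

open scoped Classical in
/-- The degree `δ(v)` of a node `v` in `G`. -/
noncomputable def deg (G : SimpleGraph V) (v : V) : ℕ :=
  (univ.filter (fun u => G.Adj v u)).card

/-- The maximum degree `Δ(G)`. -/
noncomputable def maxDeg (G : SimpleGraph V) : ℕ := univ.sup (deg G)

/-- The minimum degree `δ(G)`. -/
noncomputable def minDeg (G : SimpleGraph V) : ℕ := sInf (Set.range (deg G))

open scoped Classical in
/-- `frac G c v` is the fraction of nodes in the closed neighborhood of `v` that have
the same color as `v` (that is, `f_i(σ)` for the agent `i` occupying node `v`). -/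
noncomputable def frac (G : SimpleGraph V) (c : V → Bool) (v : V) : ℝ :=
  (((closedNbhd G v).filter (fun u => c u = c v)).card : ℝ) / ((closedNbhd G v).card : ℝ)

/-- The coloring obtained from `c` after the agents on nodes `v` and `w` swap positions. -/
def swapColor (c : V → Bool) (v w : V) : V → Bool := c ∘ Equiv.swap v w

/-- A single-peaked utility function `p` with peak at `Λ`: `p 0 = 0`, `p` is strictly
increasing on `[0,Λ]`, `p Λ = 1`, and `p x = p (Λ(1-x)/(1-Λ))` for `x ∈ [Λ,1]`. -/
structure IsSinglePeaked (p : ℝ → ℝ) (Λ : ℝ) : Prop where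
  peak_mem : Λ ∈ Set.Ioo (0 : ℝ) 1
  map_zero : p 0 = 0
  strictMonoOn : StrictMonoOn p (Set.Icc 0 Λ)
  map_peak : p Λ = 1
  symm : ∀ x ∈ Set.Icc Λ 1, p x = p (Λ * (1 - x) / (1 - Λ))

/-- A strategy profile: a 2-coloring of the nodes with exactly `b` blue (`true`) nodes. -/
def IsProfile (c : V → Bool) (b : ℕ) : Prop :=
  (univ.filter (fun v => c v = true)).card = b

/-- The structural data of a swap Schelling game `(G, b, Λ)` with utility function `p`:
`G` is connected, there are `b` blue agents with `1 ≤ b ≤ n/2`, and `p` is a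
single-peaked utility function with peak `Λ`. -/
structure IsGame (G : SimpleGraph V) (b : ℕ) (Λ : ℝ) (p : ℝ → ℝ) : Prop where
  connected : G.Connected
  one_le_b : 1 ≤ b
  b_le_half : 2 * b ≤ Fintype.card V
  singlePeaked : IsSinglePeaked p Λ

/-- The swap of the two (differently colored) agents occupying nodes `v` and `w`
is profitable: both agents strictly increase their utility. -/
def ProfitableSwap (G : SimpleGraph V) (p : ℝ → ℝ) (c : V → Bool) (v w : V) : Prop :=
  c v ≠ c w ∧
  p (frac G (swapColor c v w) w) > p (frac G c v) ∧
  p (frac G (swapColor c v w) v) > p (frac G c w)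

/-- A swap equilibrium: no profitable swap exists. -/
def IsSwapEquilibrium (G : SimpleGraph V) (p : ℝ → ℝ) (c : V → Bool) : Prop :=
  ∀ v w, ¬ ProfitableSwap G p c v w

open scoped Classical in
/-- The degree of integration: the number of non-segregated agents. -/
noncomputable def DoI (G : SimpleGraph V) (c : V → Bool) : ℕ :=
  (univ.filter (fun v => frac G c v ≠ 1)).card

open scoped Classical in
/-- The number of monochromatic edges of `G` under the coloring `c`. -/
noncomputable def Phi (G : SimpleGraph V) (c : V → Bool) : ℕ :=
  (G.edgeFinset.filter (fun e => ∀ u ∈ e, ∀ w ∈ e, c u = c w)).card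

open scoped Classical in
/-- The number of edges of `G`. -/
noncomputable def numEdges (G : SimpleGraph V) : ℕ :=
  (univ.filter (fun e : Sym2 V => e ∈ G.edgeSet)).card

/-- A finset of nodes is an independent set of `G`. -/
def IsIndepSet (G : SimpleGraph V) (s : Finset V) : Prop :=
  ∀ u ∈ s, ∀ w ∈ s, ¬ G.Adj u w

open scoped Classical in
/-- The independence number `α(G)`. -/
noncomputable def indepNum (G : SimpleGraph V) : ℕ :=
  univ.sup (fun s : Finset V => if IsIndepSet G s then s.card else 0)

open scoped Classical in
/-- The degree of `v` inside the subgraph of `G` induced by the node set `s`. -/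
noncomputable def degOn (G : SimpleGraph V) (s : Finset V) (v : V) : ℕ :=
  (s.filter (fun u => G.Adj v u)).card

/-! On a ring every closed neighbourhood has three nodes, so an agent's fraction is `1/3`, `2/3`
or `1`. For `Λ ≤ 1/2` the utility is largest at `1/3`, and for `Λ = 1/2` equally large at `2/3`.
Every swap involves a blue agent, so a profile in which all blue agents already enjoy this largest
utility is a swap equilibrium. Such profiles are obtained by repeating `BBR` (for `Λ = 1/2`) or
`BR` (for `Λ < 1/2`) on a prefix of the ring and filling the rest with red: the interior of the red
block is segregated, so only about one half, respectively two thirds, of the agents are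
integrated, whereas repeating `BRR` integrates every agent. -/

section Graph

variable {G : SimpleGraph V} {c : V → Bool} {v : V}

lemma mem_closedNbhd_self : v ∈ closedNbhd G v := by simp [closedNbhd]

lemma card_closedNbhd : (closedNbhd G v).card = deg G v + 1 := by
  classical
  have : closedNbhd G v = insert v (univ.filter (G.Adj v)) := by
    ext u; simp [closedNbhd]
  rw [this, card_insert_of_notMem (by simp), deg]

lemma frac_eq_one_iff : frac G c v = 1 ↔ ∀ u, G.Adj v u → c u = c v := by
  have hpos : (0 : ℝ) < (closedNbhd G v).card := by
    exact_mod_cast card_pos.mpr ⟨v, mem_closedNbhd_self⟩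
  rw [frac, div_eq_one_iff_eq hpos.ne', Nat.cast_inj, card_filter_eq_iff]
  simp only [closedNbhd, mem_filter, mem_univ, true_and]
  exact ⟨fun h u hu => h u (Or.inr hu), fun h u => by rintro (rfl | hu); exacts [rfl, h u hu]⟩

lemma frac_ne_one_iff : frac G c v ≠ 1 ↔ ∃ u, G.Adj v u ∧ c u ≠ c v := by
  simp [frac_eq_one_iff]

lemma frac_eq_of_forall_adj_ne (h : ∀ u, G.Adj v u → c u ≠ c v) :
    frac G c v = 1 / (deg G v + 1) := by
  have : (closedNbhd G v).filter (fun u => c u = c v) = {v} := by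
    ext u
    simp only [closedNbhd, mem_filter, mem_univ, true_and, mem_singleton]
    exact ⟨fun ⟨hu, hc⟩ => hu.resolve_right fun hadj => h u hadj hc, by rintro rfl; simp⟩
  rw [frac, this, card_closedNbhd]
  simp

lemma frac_mem_of_deg_eq_two (hv : deg G v = 2) :
    frac G c v = 1 / 3 ∨ frac G c v = 2 / 3 ∨ frac G c v = 1 := by
  rw [frac, card_closedNbhd, hv]
  have h1 : 1 ≤ ((closedNbhd G v).filter (fun u => c u = c v)).card :=
    card_pos.mpr ⟨v, mem_filter.mpr ⟨mem_closedNbhd_self, rfl⟩⟩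
  have h3 : ((closedNbhd G v).filter (fun u => c u = c v)).card ≤ 3 :=
    (card_filter_le _ _).trans (by rw [card_closedNbhd, hv])
  interval_cases ((closedNbhd G v).filter (fun u => c u = c v)).card <;> norm_num

lemma DoI_eq_card (h : ∀ v, frac G c v ≠ 1) : DoI G c = Fintype.card V := by
  rw [DoI, filter_true_of_mem fun v _ => h v, card_univ]

lemma DoI_le_card_sub (S : Finset V) (hS : ∀ v ∈ S, frac G c v = 1) :
    DoI G c ≤ Fintype.card V - S.card := by
  classical
  rw [← card_compl, DoI]
  exact card_le_card fun v hv => mem_compl.mpr fun hvS => (mem_filter.mp hv).2 (hS v hvS)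

lemma DoI_pos (h : frac G c v ≠ 1) : 0 < DoI G c :=
  card_pos.mpr ⟨v, mem_filter.mpr ⟨mem_univ v, h⟩⟩

lemma isSwapEquilibrium_of_forall_blue_ge {p : ℝ → ℝ} {M : ℝ}
    (hM : ∀ (c' : V → Bool) v, p (frac G c' v) ≤ M)
    (hblue : ∀ v, c v = true → M ≤ p (frac G c v)) : IsSwapEquilibrium G p c := by
  rintro v w ⟨hne, hv, hw⟩
  cases hcv : c v
  · have hcw : c w = true := by rw [hcv] at hne; cases hcw : c w <;> simp_all
    linarith [hM (swapColor c v w) v, hblue w hcw]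
  · linarith [hM (swapColor c v w) w, hblue v hcv]

end Graph

namespace IsSinglePeaked

variable {p : ℝ → ℝ} {Λ : ℝ}

lemma antitoneOn (hp : IsSinglePeaked p Λ) : AntitoneOn p (Set.Icc Λ 1) := by
  obtain ⟨hΛ0, hΛ1⟩ := hp.peak_mem
  have hmem : ∀ x ∈ Set.Icc Λ 1, Λ * (1 - x) / (1 - Λ) ∈ Set.Icc 0 Λ := fun x hx =>
    ⟨div_nonneg (mul_nonneg hΛ0.le (by linarith [hx.2])) (by linarith),
      div_le_of_le_mul₀ (by linarith) hΛ0.le (by nlinarith [hx.1])⟩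
  intro x hx y hy hxy
  rw [hp.symm x hx, hp.symm y hy]
  exact hp.strictMonoOn.monotoneOn (hmem y hy) (hmem x hx)
    (div_le_div_of_nonneg_right (by nlinarith) (by linarith))

lemma apply_two_thirds_le (hp : IsSinglePeaked p Λ) (hΛ : Λ ≤ 1 / 2) :
    p (2 / 3) ≤ p (1 / 3) := by
  obtain ⟨hΛ0, hΛ1⟩ := hp.peak_mem
  rcases le_or_gt Λ (1 / 3) with h | h
  · exact hp.antitoneOn ⟨h, by norm_num⟩ ⟨by linarith, by norm_num⟩ (by norm_num)
  · rw [hp.symm (2 / 3) ⟨by linarith, by norm_num⟩]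
    refine hp.strictMonoOn.monotoneOn ⟨by positivity, ?_⟩ ⟨by norm_num, h.le⟩ ?_
    all_goals rw [div_le_iff₀ (by linarith)]; nlinarith

lemma apply_two_thirds_of_half (hp : IsSinglePeaked p (1 / 2)) : p (2 / 3) = p (1 / 3) := by
  rw [hp.symm (2 / 3) ⟨by norm_num, by norm_num⟩]
  norm_num

variable {G : SimpleGraph V} {v : V}

lemma apply_frac_le_of_deg_eq_two (hp : IsSinglePeaked p Λ) (hΛ : Λ ≤ 1 / 2)
    (hv : deg G v = 2) (c : V → Bool) : p (frac G c v) ≤ p (1 / 3) := by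
  rcases frac_mem_of_deg_eq_two (c := c) hv with h | h | h <;> rw [h]
  · exact hp.apply_two_thirds_le hΛ
  · calc p 1 ≤ p (2 / 3) :=
          hp.antitoneOn ⟨by linarith, by norm_num⟩ ⟨by linarith, le_rfl⟩ (by norm_num)
      _ ≤ p (1 / 3) := hp.apply_two_thirds_le hΛ

lemma apply_frac_of_half (hp : IsSinglePeaked p (1 / 2)) {c : V → Bool} (hv : deg G v = 2)
    (h : frac G c v ≠ 1) : p (frac G c v) = p (1 / 3) := by
  rcases frac_mem_of_deg_eq_two (c := c) hv with h' | h' | h'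
  · rw [h']
  · rw [h', hp.apply_two_thirds_of_half]
  · exact absurd h' h

lemma isSwapEquilibrium_of_deg_eq_two (hp : IsSinglePeaked p Λ) (hΛ : Λ ≤ 1 / 2)
    (hdeg : ∀ v, deg G v = 2) {c : V → Bool}
    (hblue : ∀ v, c v = true → p (1 / 3) ≤ p (frac G c v)) : IsSwapEquilibrium G p c :=
  isSwapEquilibrium_of_forall_blue_ge (fun c' v => hp.apply_frac_le_of_deg_eq_two hΛ (hdeg v) c')
    hblue

end IsSinglePeaked

section Counting

lemma card_filter_fin_val_eq_count (n : ℕ) (P : ℕ → Prop) [DecidablePred P] :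
    (univ.filter (fun v : Fin n => P v.val)).card = Nat.count P n := by
  rw [Nat.count_eq_card_filter_range, ← card_map Fin.valEmbedding]
  congr 1
  ext k
  simp only [mem_map, mem_filter, mem_univ, true_and, Fin.valEmbedding_apply, mem_range]
  constructor
  · rintro ⟨a, ha, rfl⟩; exact ⟨a.isLt, ha⟩
  · rintro ⟨hk, hP⟩; exact ⟨⟨k, hk⟩, hP, rfl⟩

lemma count_mod_lt {m r : ℕ} (hr : r ≤ m) (q : ℕ) :
    Nat.count (fun k => k % m < r) (m * q) = q * r := by
  induction q with
  | zero => simp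
  | succ q ih =>
    have hblock : Nat.count (fun k => (m * q + k) % m < r) m = r := by
      simp_rw [Nat.mul_add_mod, Nat.count_eq_card_filter_range]
      convert card_range r using 2
      ext k
      simp only [mem_filter, mem_range]
      constructor
      · rintro ⟨hk, h⟩; rwa [Nat.mod_eq_of_lt hk] at h
      · intro hk; exact ⟨by omega, by rwa [Nat.mod_eq_of_lt (by omega)]⟩
    rw [Nat.mul_succ, Nat.count_add, ih, hblock, Nat.succ_mul]

lemma count_lt_and_eq_of_le {L n : ℕ} (h : L ≤ n) (P : ℕ → Prop) [DecidablePred P] :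
    Nat.count (fun k => k < L ∧ P k) n = Nat.count P L := by
  simp only [Nat.count_eq_card_filter_range]
  congr 1
  ext k
  simp only [mem_filter, mem_range]
  exact ⟨fun ⟨_, hkL, hP⟩ => ⟨hkL, hP⟩, fun ⟨hkL, hP⟩ => ⟨by omega, hkL, hP⟩⟩

end Counting

lemma sub_lt_mul_div_add_one {κ ε L : ℝ} (hε : 0 < ε) (hκ : 0 ≤ κ) (hL : κ / ε < L) :
    κ - ε < κ * L / (L + 1) := by
  have hL0 : 0 < L := lt_of_le_of_lt (by positivity) hL
  rw [div_lt_iff₀ hε] at hL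
  rw [lt_div_iff₀ (by linarith)]
  nlinarith

section Ring

open SimpleGraph

variable {n : ℕ}

lemma cycleGraph_adj_iff_val (hn : 2 ≤ n) {u v : Fin n} :
    (cycleGraph n).Adj u v ↔ u.val + 1 = v.val ∨ v.val + 1 = u.val ∨
      (u.val + 1 = n ∧ v.val = 0) ∨ (v.val + 1 = n ∧ u.val = 0) := by
  have val_sub_eq_one : ∀ a b : Fin n,
      (a - b).val = 1 ↔ b.val + 1 = a.val ∨ (b.val + 1 = n ∧ a.val = 0) := by
    intro a b
    rcases le_or_gt b a with h | h
    · rw [Fin.sub_val_of_le h]; rw [Fin.le_def] at h; omega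
    · rw [Fin.coe_sub_iff_lt.mpr h]; rw [Fin.lt_def] at h; omega
  rw [cycleGraph_adj', val_sub_eq_one, val_sub_eq_one]
  omega

lemma deg_cycleGraph (hn : 3 ≤ n) (v : Fin n) : deg (cycleGraph n) v = 2 := by
  obtain ⟨k, rfl⟩ : ∃ k, n = k + 3 := ⟨n - 3, by omega⟩
  rw [← cycleGraph_degree_three_le (v := v), ← card_neighborFinset_eq_degree, deg]
  congr 1
  ext u
  simp

lemma isGame_cycleGraph {b : ℕ} {Λ : ℝ} {p : ℝ → ℝ} (hp : IsSinglePeaked p Λ)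
    (hb : 1 ≤ b) (hbn : 2 * b ≤ n) : IsGame (cycleGraph n) b Λ p := by
  obtain ⟨k, rfl⟩ : ∃ k, n = k + 1 := ⟨n - 1, by omega⟩
  exact ⟨cycleGraph_connected, hb, by simpa using hbn, hp⟩

lemma frac_cycleGraph_ne_one_of_val (hn : 2 ≤ n) {c : Fin n → Bool} {v : Fin n} {k : ℕ}
    (hk : k < n) (hadj : v.val + 1 = k ∨ k + 1 = v.val ∨ (v.val + 1 = n ∧ k = 0) ∨
      (k + 1 = n ∧ v.val = 0)) (hc : c ⟨k, hk⟩ ≠ c v) :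
    frac (cycleGraph n) c v ≠ 1 :=
  frac_ne_one_iff.mpr ⟨⟨k, hk⟩, (cycleGraph_adj_iff_val hn).mpr hadj, hc⟩

def prefixPattern (m r L : ℕ) (v : Fin n) : Bool := decide (v.val < L ∧ v.val % m < r)

lemma isProfile_prefixPattern {m r q b : ℕ} (hr : r ≤ m) (h : m * q ≤ n) (hb : q * r = b) :
    IsProfile (prefixPattern m r (m * q) : Fin n → Bool) b := by
  simp only [IsProfile, prefixPattern, decide_eq_true_eq]
  rw [card_filter_fin_val_eq_count n (fun k => k < m * q ∧ k % m < r), count_lt_and_eq_of_le h,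
    count_mod_lt hr, hb]

lemma frac_prefixPattern_eq_one {m r q : ℕ} (hr : r < m) {v : Fin n} (hv : m * q ≤ v.val)
    (hvn : v.val + 2 ≤ n) : frac (cycleGraph n) (prefixPattern m r (m * q)) v = 1 := by
  have hbefore : ∀ k, k + 1 = m * q → r ≤ k % m := by
    intro k hk
    have hq : q ≠ 0 := by rintro rfl; simp at hk
    obtain ⟨q, rfl⟩ := Nat.exists_eq_succ_of_ne_zero hq
    rw [show k = (m - 1) + m * q by rw [Nat.mul_succ] at hk; omega, Nat.add_mul_mod_self_left,
      Nat.mod_eq_of_lt (by omega)]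
    omega
  rw [frac_eq_one_iff]
  intro u hu
  rw [cycleGraph_adj_iff_val (by omega)] at hu
  have := hbefore u.val
  simp only [prefixPattern, decide_eq_decide]
  omega

lemma DoI_prefixPattern_le {m r q : ℕ} (hr : r < m) (h : m * q < n) :
    DoI (cycleGraph n) (prefixPattern m r (m * q)) ≤ m * q + 1 := by
  have hS := DoI_le_card_sub (G := cycleGraph n) (c := prefixPattern m r (m * q))
    (Ico ⟨m * q, h⟩ ⟨n - 1, by omega⟩) fun v hv => by
      rw [mem_Ico, Fin.le_def, Fin.lt_def] at hv
      exact frac_prefixPattern_eq_one hr hv.1 (by omega)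
  rw [Fin.card_Ico, Fintype.card_fin, Fin.val_mk, Fin.val_mk] at hS
  omega

lemma DoI_prefixPattern_pos {m r L : ℕ} (hr : 0 < r) (hL : 0 < L) (hLn : L < n) :
    0 < DoI (cycleGraph n) (prefixPattern m r L) :=
  DoI_pos (v := ⟨0, by omega⟩) <|
    frac_cycleGraph_ne_one_of_val (k := n - 1) (by omega) (by omega) (Or.inr <| Or.inr <| Or.inr ⟨by omega, rfl⟩) (by simp [prefixPattern, hL, hr]; omega)

lemma DoI_prefixPattern_three_one (h3 : 3 ∣ n) :
    DoI (cycleGraph n) (prefixPattern 3 1 n) = n := by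
  rcases Nat.eq_zero_or_pos n with rfl | hn
  · simp [DoI]
  rw [DoI_eq_card fun v => ?_, Fintype.card_fin]
  have hv := v.isLt
  rcases (by omega : v.val % 3 = 1 ∨ (v.val % 3 ≠ 1 ∧ v.val + 1 < n) ∨ v.val + 1 = n)
    with h | h | h
  · exact frac_cycleGraph_ne_one_of_val (k := v.val - 1) (by omega) (by omega) (by omega)
      (by simp only [prefixPattern, ne_eq, decide_eq_decide]; omega)
  · exact frac_cycleGraph_ne_one_of_val (k := v.val + 1) (by omega) (by omega) (by omega)
      (by simp only [prefixPattern, ne_eq, decide_eq_decide]; omega)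
  · exact frac_cycleGraph_ne_one_of_val (k := 0) (by omega) (by omega) (by omega)
      (by simp only [prefixPattern, ne_eq, decide_eq_decide]; omega)

variable {p : ℝ → ℝ}

lemma isSwapEquilibrium_prefixPattern_three_two (hp : IsSinglePeaked p (1 / 2)) (hn : 3 ≤ n)
    {q : ℕ} (hq : 3 * q < n) :
    IsSwapEquilibrium (cycleGraph n) p (prefixPattern 3 2 (3 * q)) := by
  have hdeg := deg_cycleGraph hn
  refine hp.isSwapEquilibrium_of_deg_eq_two (by norm_num) hdeg fun v hv => ?_
  rw [hp.apply_frac_of_half (hdeg v)]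
  simp only [prefixPattern, decide_eq_true_eq] at hv
  rcases (by omega : v.val % 3 = 1 ∨ v.val = 0 ∨ (v.val % 3 = 0 ∧ 0 < v.val)) with h | h | h
  · exact frac_cycleGraph_ne_one_of_val (k := v.val + 1) (by omega) (by omega) (by omega)
      (by simp only [prefixPattern, ne_eq, decide_eq_decide]; omega)
  · exact frac_cycleGraph_ne_one_of_val (k := n - 1) (by omega) (by omega) (by omega)
      (by simp only [prefixPattern, ne_eq, decide_eq_decide]; omega)
  · exact frac_cycleGraph_ne_one_of_val (k := v.val - 1) (by omega) (by omega) (by omega)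
      (by simp only [prefixPattern, ne_eq, decide_eq_decide]; omega)

lemma isSwapEquilibrium_prefixPattern_two_one {Λ : ℝ} (hp : IsSinglePeaked p Λ)
    (hΛ : Λ ≤ 1 / 2) (hn : 3 ≤ n) {q : ℕ} (hq : 2 * q < n) :
    IsSwapEquilibrium (cycleGraph n) p (prefixPattern 2 1 (2 * q)) := by
  have hdeg := deg_cycleGraph hn
  refine hp.isSwapEquilibrium_of_deg_eq_two hΛ hdeg fun v hv => ?_
  have hred : ∀ u, (cycleGraph n).Adj v u →
      prefixPattern 2 1 (2 * q) u ≠ prefixPattern 2 1 (2 * q) v := by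
    intro u hu
    rw [cycleGraph_adj_iff_val (by omega)] at hu
    simp only [prefixPattern, decide_eq_true_eq] at hv
    simp only [prefixPattern, ne_eq, decide_eq_decide]
    omega
  rw [frac_eq_of_forall_adj_ne hred, hdeg]
  norm_num

lemma sub_lt_DoI_div_DoI {m r q : ℕ} {κ ε : ℝ} (hε : 0 < ε) (hκ : 0 ≤ κ) (hr : 0 < r)
    (hrm : r < m) (hmq : m * q < n) (h3 : 3 ∣ n) (hn : (n : ℝ) = κ * (m * q : ℕ))
    (hq : κ / ε < (m * q : ℕ)) :
    κ - ε < (DoI (cycleGraph n) (prefixPattern 3 1 n) : ℝ) /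
      DoI (cycleGraph n) (prefixPattern m r (m * q)) := by
  have hmq0 : 0 < m * q := by exact_mod_cast (by positivity : 0 ≤ κ / ε).trans_lt hq
  have hpos := DoI_prefixPattern_pos (n := n) (m := m) hr hmq0 hmq
  have hle := DoI_prefixPattern_le (n := n) hrm hmq
  rw [DoI_prefixPattern_three_one h3]
  calc κ - ε < κ * (m * q : ℕ) / ((m * q : ℕ) + 1) := sub_lt_mul_div_add_one hε hκ hq
    _ ≤ n / DoI (cycleGraph n) (prefixPattern m r (m * q)) := by
      rw [hn]
      gcongr
      exact_mod_cast hle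

end Ring

/-- For every `ε > 0`: (i) there is a game on a ring (a connected
`2`-regular graph) with peak `1/2`, a swap equilibrium `σ` and a profile `σ*` with
`DoI(σ*)/DoI(σ) > 2 - ε`; (ii) for every peak `Λ < 1/2` there is such a game with
`DoI(σ*)/DoI(σ) > 3/2 - ε`. -/
theorem price_of_anarchy_lower_bound_rings
    (ε : ℝ) (hε : 0 < ε) :
    (∀ p : ℝ → ℝ, IsSinglePeaked p (1 / 2) →
      ∃ (n : ℕ) (G : SimpleGraph (Fin n)) (b : ℕ),
        IsGame G b (1 / 2) p ∧ (∀ v, deg G v = 2) ∧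
        ∃ c cstar : Fin n → Bool, IsProfile c b ∧ IsProfile cstar b ∧
          IsSwapEquilibrium G p c ∧
          2 - ε < (DoI G cstar : ℝ) / (DoI G c : ℝ)) ∧
    (∀ Λ : ℝ, Λ < 1 / 2 → ∀ p : ℝ → ℝ, IsSinglePeaked p Λ →
      ∃ (n : ℕ) (G : SimpleGraph (Fin n)) (b : ℕ),
        IsGame G b Λ p ∧ (∀ v, deg G v = 2) ∧
        ∃ c cstar : Fin n → Bool, IsProfile c b ∧ IsProfile cstar b ∧
          IsSwapEquilibrium G p c ∧
          3 / 2 - ε < (DoI G cstar : ℝ) / (DoI G c : ℝ)) := by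
  refine ⟨fun p hp => ?_, fun Λ hΛ p hp => ?_⟩
  · obtain ⟨t, ht⟩ := exists_nat_gt (2 / ε)
    have ht0 : 0 < t := by exact_mod_cast (by positivity : (0 : ℝ) ≤ 2 / ε).trans_lt ht
    exact ⟨3 * (2 * t), _, 2 * t, isGame_cycleGraph hp (by omega) (by omega),
      deg_cycleGraph (by omega), prefixPattern 3 2 (3 * t), prefixPattern 3 1 (3 * (2 * t)),
      isProfile_prefixPattern (by norm_num) (by omega) (by ring),
      isProfile_prefixPattern (by norm_num) le_rfl (by ring),
      isSwapEquilibrium_prefixPattern_three_two hp (by omega) (by omega),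
      sub_lt_DoI_div_DoI hε (by norm_num) (by norm_num) (by norm_num) (by omega)
        (dvd_mul_right 3 _) (by push_cast; ring) (by push_cast; linarith)⟩
  · obtain ⟨b, hb⟩ := exists_nat_gt (3 / 2 / ε)
    have hb0 : 0 < b := by exact_mod_cast (by positivity : (0 : ℝ) ≤ 3 / 2 / ε).trans_lt hb
    exact ⟨3 * b, _, b, isGame_cycleGraph hp (by omega) (by omega),
      deg_cycleGraph (by omega), prefixPattern 2 1 (2 * b), prefixPattern 3 1 (3 * b),
      isProfile_prefixPattern (by norm_num) (by omega) (by ring),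
      isProfile_prefixPattern (by norm_num) le_rfl (by ring),
      isSwapEquilibrium_prefixPattern_two_one hp hΛ.le (by omega) (by omega),
      sub_lt_DoI_div_DoI hε (by norm_num) (by norm_num) (by norm_num) (by omega)
        (dvd_mul_right 3 _) (by push_cast; ring) (by push_cast; linarith)⟩

end SwapSchelling
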